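/- Let su(2) denote the real Lie algebra of 2×2 complex matrices x with xᴴ = −x and trace x = 0, with Killing form κ, and let g̃ = su(2) × su(2) with the real symmetric bilinear form B((x,y),(x',y')) = −κ(x,x') + κ(y,y'). Then there is no involutive Lie algebra automorphism θ of g̃ (θ ∘ θ = id) such that (v,w) ↦ B(v, θ(w)) is positive definite on g̃, and likewise there is no involutive Lie algebra automorphism θ of g̃ such that (v,w) ↦ −B(v, θ(w)) is positive definite on g̃. -/

import Mathlib

/-!
Let `θ` be an involutive automorphism of `su(2) × su(2)` with `B(v, θ v) > 0` for `v ≠ 0`.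
Testing positivity on vectors `(x, 0)` shows that `x ↦ (θ (x, 0)).1` is injective, hence onto
`su(2)`; since `θ (x, 0)` commutes with `θ (0, y)`, the first component of `θ (0, y)` is central,
hence zero (`κ` is nondegenerate, so `su(2)` is centreless and nonabelian). So `θ` restricts to an involutive automorphism `k` of the second factor with
`κ(y, k y) > 0`. As `κ` is negative definite, a nonzero vector `y + k y` fixed by `k` cannot
exist, so `k = -1`, which is not an automorphism of the nonabelian `su(2)`. For `-B` the two
factors exchange roles.
-/

/-- The product of two Lie rings is a Lie ring, with componentwise bracket. -/
instance prodLieRing (L₁ L₂ : Type*) [LieRing L₁] [LieRing L₂] : LieRing (L₁ × L₂) :=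
  { (inferInstance : AddCommGroup (L₁ × L₂)) with
    bracket := fun x y => (⁅x.1, y.1⁆, ⁅x.2, y.2⁆)
    add_lie := fun x y z => by
      show (⁅(x + y).1, z.1⁆, ⁅(x + y).2, z.2⁆)
        = (⁅x.1, z.1⁆, ⁅x.2, z.2⁆) + (⁅y.1, z.1⁆, ⁅y.2, z.2⁆)
      simp [add_lie]
    lie_add := fun x y z => by
      show (⁅x.1, (y + z).1⁆, ⁅x.2, (y + z).2⁆)
        = (⁅x.1, y.1⁆, ⁅x.2, y.2⁆) + (⁅x.1, z.1⁆, ⁅x.2, z.2⁆)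
      simp [lie_add]
    lie_self := fun x => by
      show (⁅x.1, x.1⁆, ⁅x.2, x.2⁆) = 0
      simp
    leibniz_lie := fun x y z => by
      show (⁅x.1, ⁅y.1, z.1⁆⁆, ⁅x.2, ⁅y.2, z.2⁆⁆)
        = (⁅⁅x.1, y.1⁆, z.1⁆, ⁅⁅x.2, y.2⁆, z.2⁆) + (⁅y.1, ⁅x.1, z.1⁆⁆, ⁅y.2, ⁅x.2, z.2⁆⁆)
      simp }

/-- The product of two real Lie algebras is a real Lie algebra. -/
instance prodLieAlgebra (L₁ L₂ : Type*) [LieRing L₁] [LieRing L₂]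
    [LieAlgebra ℝ L₁] [LieAlgebra ℝ L₂] : LieAlgebra ℝ (L₁ × L₂) :=
  { (inferInstance : Module ℝ (L₁ × L₂)) with
    lie_smul := fun t x y => by
      show (⁅x.1, (t • y).1⁆, ⁅x.2, (t • y).2⁆) = t • (⁅x.1, y.1⁆, ⁅x.2, y.2⁆)
      simp }

attribute [local instance 100] LieRing.ofAssociativeRing

/-- The real Lie algebra `su(2)` of traceless skew-Hermitian `2 × 2` complex matrices. -/
def su2 : LieSubalgebra ℝ (Matrix (Fin 2) (Fin 2) ℂ) where
  carrier := {x | x.conjTranspose = -x ∧ x.trace = 0}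
  zero_mem' := by constructor <;> simp
  add_mem' := by
    rintro a b ⟨ha1, ha2⟩ ⟨hb1, hb2⟩
    constructor
    · rw [Matrix.conjTranspose_add, ha1, hb1, neg_add]
    · rw [Matrix.trace_add, ha2, hb2, add_zero]
  smul_mem' := by
    rintro c a ⟨ha1, ha2⟩
    constructor
    · show ((c : ℂ) • a).conjTranspose = -((c : ℂ) • a)
      rw [Matrix.conjTranspose_smul, ha1]
      simp [Complex.star_def]
    · show ((c : ℂ) • a).trace = 0
      rw [Matrix.trace_smul, ha2, smul_zero]
  lie_mem' := by
    rintro a b ⟨ha1, ha2⟩ ⟨hb1, hb2⟩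
    constructor
    · show ⁅a, b⁆.conjTranspose = -⁅a, b⁆
      rw [Ring.lie_def, Matrix.conjTranspose_sub, Matrix.conjTranspose_mul,
        Matrix.conjTranspose_mul, ha1, hb1]
      simp only [Matrix.neg_mul, Matrix.mul_neg, neg_neg, neg_sub]
    · show ⁅a, b⁆.trace = 0
      rw [Ring.lie_def, Matrix.trace_sub, Matrix.trace_mul_comm, sub_self]

/-- The bilinear form `B((x,y),(x',y')) = -κ(x,x') + κ(y,y')` of signature `(3,3)` on
`su(2) × su(2)`, where `κ` is the Killing form of `su(2)`. -/
noncomputable def Bform (v w : ↥su2 × ↥su2) : ℝ :=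
  -(killingForm ℝ ↥su2 v.1 w.1) + killingForm ℝ ↥su2 v.2 w.2

open LieAlgebra

theorem apply_eq_neg_of_involutive_of_pos {M F : Type*} [AddCommGroup M] [FunLike F M M]
    [AddHomClass F M M] (k : F) (β : M → M → ℝ) (hk : ∀ y, k (k y) = y)
    (hneg : ∀ y ≠ 0, β y y < 0) (hpos : ∀ y ≠ 0, 0 < β y (k y)) (y : M) : k y = -y := by
  by_contra h
  have hw : y + k y ≠ 0 := fun h' => h (eq_neg_of_add_eq_zero_right h')
  have hfix : k (y + k y) = y + k y := by rw [map_add, hk, add_comm]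
  have := hpos _ hw
  rw [hfix] at this
  exact (hneg _ hw).not_gt this

theorem LieHom.isLieAbelian_of_apply_eq_neg {K L : Type*} [Field K] [NeZero (2 : K)] [LieRing L]
    [LieAlgebra K L] (k : L →ₗ⁅K⁆ L) (hk : ∀ y, k y = -y) : IsLieAbelian L := by
  refine ⟨fun y z => ?_⟩
  have h : -⁅y, z⁆ = ⁅y, z⁆ := by rw [← hk, k.map_lie, hk, hk, neg_lie, lie_neg, neg_neg]
  have h2 : (2 : K) • ⁅y, z⁆ = 0 := by rw [two_smul, ← neg_add_cancel ⁅y, z⁆, h]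
  exact (smul_eq_zero.mp h2).resolve_left two_ne_zero

theorem LieAlgebra.IsKilling.of_killingForm_anisotropic {R L : Type*} [CommRing R] [LieRing L]
    [LieAlgebra R L] [Module.Free R L] [Module.Finite R L]
    (h : ∀ x, killingForm R L x x = 0 → x = 0) : IsKilling R L :=
  ⟨(LieSubmodule.eq_bot_iff _).mpr fun x hx =>
    h x ((LieIdeal.mem_killingCompl R L ⊤).mp hx x (LieSubmodule.mem_top x))⟩

theorem LinearMap.BilinForm.apply_self_neg_of_basis {ι M : Type*} [Fintype ι] [DecidableEq ι]
    [AddCommGroup M] [Module ℝ M] (b : Module.Basis ι ℝ M) (β : LinearMap.BilinForm ℝ M) {c : ℝ}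
    (hc : c < 0) (hβ : ∀ i j, β (b i) (b j) = if i = j then c else 0) {x : M} (hx : x ≠ 0) :
    β x x < 0 := by
  have hsum : β x x = c * ∑ i, b.repr x i ^ 2 := by
    conv_lhs => rw [← b.sum_repr x]
    simp only [map_sum, map_smul, LinearMap.sum_apply, LinearMap.smul_apply, hβ, smul_eq_mul,
      mul_ite, mul_zero, Finset.sum_ite_eq', Finset.mem_univ, if_true, Finset.mul_sum]
    exact Finset.sum_congr rfl fun i _ => by ring
  have hpos : 0 < ∑ i, b.repr x i ^ 2 := by
    obtain ⟨i, hi⟩ : ∃ i, b.repr x i ≠ 0 := by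
      by_contra! h
      exact hx (b.repr.injective (by ext i; simpa using h i))
    exact Finset.sum_pos' (fun _ _ => sq_nonneg _) ⟨i, Finset.mem_univ _, by positivity⟩
  rw [hsum]
  exact mul_neg_of_neg_of_pos hc hpos

def IsCartanInvolution {L : Type*} [LieRing L] [LieAlgebra ℝ L] (B : L → L → ℝ)
    (θ : L →ₗ⁅ℝ⁆ L) : Prop :=
  (∀ v, θ (θ v) = v) ∧ ∀ v, v ≠ 0 → 0 < B v (θ v)

section Prod

variable {L₁ L₂ : Type*} [LieRing L₁] [LieAlgebra ℝ L₁] [LieRing L₂] [LieAlgebra ℝ L₂]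

theorem fst_apply_inr_eq_zero [FiniteDimensional ℝ L₁] (h₁ : center ℝ L₁ = ⊥)
    (θ : L₁ × L₂ →ₗ⁅ℝ⁆ L₁ × L₂)
    (hθ : Function.Injective ((LieHom.fst ℝ L₁ L₂).comp (θ.comp (LieHom.inl ℝ L₁ L₂))))
    (y : L₂) : (θ (0, y)).1 = 0 := by
  set F := (LieHom.fst ℝ L₁ L₂).comp (θ.comp (LieHom.inl ℝ L₁ L₂))
  have hF : Function.Surjective F := LinearMap.injective_iff_surjective.mp hθ
  rw [← LieSubmodule.mem_bot (R := ℝ) (L := L₁), ← h₁, LieModule.mem_maxTrivSubmodule]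
  intro w
  obtain ⟨x, rfl⟩ := hF w
  have hcomm : ⁅((x, 0) : L₁ × L₂), ((0, y) : L₁ × L₂)⁆ = 0 :=
    Prod.ext (lie_zero x) (zero_lie y)
  simpa [F, hcomm] using congrArg Prod.fst (θ.map_lie (x, 0) (0, y)).symm

theorem not_isCartanInvolution_prod_of_neg_snd [FiniteDimensional ℝ L₁] (h₁ : center ℝ L₁ = ⊥)
    (h₂ : ¬ IsLieAbelian L₂) (β₁ : LinearMap.BilinForm ℝ L₁) (β₂ : LinearMap.BilinForm ℝ L₂)
    (hβ₂ : ∀ y ≠ 0, β₂ y y < 0) (θ : L₁ × L₂ →ₗ⁅ℝ⁆ L₁ × L₂) :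
    ¬ IsCartanInvolution (fun v w => β₁ v.1 w.1 + β₂ v.2 w.2) θ := by
  rintro ⟨hinv, hpos⟩
  have hinj : Function.Injective ((LieHom.fst ℝ L₁ L₂).comp (θ.comp (LieHom.inl ℝ L₁ L₂))) := by
    rw [injective_iff_map_eq_zero]
    intro x (hx : (θ (x, 0)).1 = 0)
    by_contra hx0
    simpa [hx] using hpos (x, 0) (by simpa using hx0)
  set k := (LieHom.snd ℝ L₁ L₂).comp (θ.comp (LieHom.inr ℝ L₁ L₂))
  have hθk (y : L₂) : θ (0, y) = (0, k y) := Prod.ext (fst_apply_inr_eq_zero h₁ θ hinj y) rfl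
  have hk (y : L₂) : k (k y) = y := by
    simpa [hθk] using congrArg Prod.snd (hinv (0, y))
  have hkpos (y : L₂) (hy : y ≠ 0) : 0 < β₂ y (k y) := by
    simpa [hθk] using hpos (0, y) (by simpa using hy)
  exact h₂ (k.isLieAbelian_of_apply_eq_neg
    (apply_eq_neg_of_involutive_of_pos k (β₂ · ·) hk hβ₂ hkpos))

theorem not_isCartanInvolution_prod_of_neg_fst [FiniteDimensional ℝ L₂] (h₂ : center ℝ L₂ = ⊥)
    (h₁ : ¬ IsLieAbelian L₁) (β₁ : LinearMap.BilinForm ℝ L₁) (β₂ : LinearMap.BilinForm ℝ L₂)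
    (hβ₁ : ∀ x ≠ 0, β₁ x x < 0) (θ : L₁ × L₂ →ₗ⁅ℝ⁆ L₁ × L₂) :
    ¬ IsCartanInvolution (fun v w => β₁ v.1 w.1 + β₂ v.2 w.2) θ := by
  rintro ⟨hinv, hpos⟩
  let σ := LieEquiv.prodComm ℝ L₁ L₂
  refine not_isCartanInvolution_prod_of_neg_snd h₂ h₁ β₂ β₁ hβ₁
    ((σ : L₁ × L₂ →ₗ⁅ℝ⁆ L₂ × L₁).comp (θ.comp σ.symm)) ⟨fun v => ?_, fun v hv => ?_⟩
  · simp [hinv]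
  · dsimp only
    rw [add_comm]
    exact hpos (σ.symm v) (by simpa using hv)

end Prod

namespace su2

-- `i σ₃, i σ₂, i σ₁` for the Pauli matrices `σⱼ`
open Complex in
def basisMatrix : Fin 3 → Matrix (Fin 2) (Fin 2) ℂ
  | 0 => !![I, 0; 0, -I]
  | 1 => !![0, 1; -1, 0]
  | 2 => !![0, I; I, 0]

theorem basisMatrix_mem (i : Fin 3) : basisMatrix i ∈ su2 := by
  fin_cases i <;> constructor <;>
    simp [basisMatrix, Matrix.trace_fin_two, ← Matrix.ext_iff, Matrix.conjTranspose_apply,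
      Fin.forall_fin_two]

def gen (i : Fin 3) : su2 := ⟨basisMatrix i, basisMatrix_mem i⟩

@[simp] theorem coe_gen (i : Fin 3) : (gen i : Matrix (Fin 2) (Fin 2) ℂ) = basisMatrix i := rfl

theorem lie_gen_zero_one : ⁅gen 0, gen 1⁆ = (2 : ℝ) • gen 2 := by
  apply Subtype.ext
  simp only [LieSubalgebra.coe_bracket, Ring.lie_def, SetLike.val_smul, coe_gen]
  ext i j
  fin_cases i <;> fin_cases j <;> simp [basisMatrix] <;> ring

theorem lie_gen_one_two : ⁅gen 1, gen 2⁆ = (2 : ℝ) • gen 0 := by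
  apply Subtype.ext
  simp only [LieSubalgebra.coe_bracket, Ring.lie_def, SetLike.val_smul, coe_gen]
  ext i j
  fin_cases i <;> fin_cases j <;> simp [basisMatrix] <;> ring

theorem lie_gen_two_zero : ⁅gen 2, gen 0⁆ = (2 : ℝ) • gen 1 := by
  apply Subtype.ext
  simp only [LieSubalgebra.coe_bracket, Ring.lie_def, SetLike.val_smul, coe_gen]
  ext i j
  fin_cases i <;> fin_cases j <;> simp [basisMatrix] <;> ring

theorem eq_sum_smul_gen (x : su2) :
    x = ((x : Matrix (Fin 2) (Fin 2) ℂ) 0 0).im • gen 0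
      + ((x : Matrix (Fin 2) (Fin 2) ℂ) 0 1).re • gen 1
      + ((x : Matrix (Fin 2) (Fin 2) ℂ) 0 1).im • gen 2 := by
  obtain ⟨hskew, htr⟩ := x.2
  have h00 : ((x : Matrix (Fin 2) (Fin 2) ℂ) 0 0).re = 0 := by
    simpa [Complex.ext_iff, Matrix.conjTranspose_apply, CharZero.eq_neg_self_iff]
      using congrFun (congrFun hskew 0) 0
  have h10 : (x : Matrix (Fin 2) (Fin 2) ℂ) 1 0 = -star ((x : Matrix (Fin 2) (Fin 2) ℂ) 0 1) := by
    have h := congrFun (congrFun hskew 1) 0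
    rw [Matrix.conjTranspose_apply, Matrix.neg_apply] at h
    rw [h, neg_neg]
  have h11 : (x : Matrix (Fin 2) (Fin 2) ℂ) 1 1 = -(x : Matrix (Fin 2) (Fin 2) ℂ) 0 0 :=
    eq_neg_of_add_eq_zero_right (by rwa [Matrix.trace_fin_two] at htr)
  apply Subtype.ext
  simp only [AddMemClass.coe_add, SetLike.val_smul, coe_gen]
  ext i j
  fin_cases i <;> fin_cases j <;> simp [basisMatrix, Complex.ext_iff, h00, h10, h11]

theorem linearIndependent_gen : LinearIndependent ℝ gen := by
  rw [Fintype.linearIndependent_iff]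
  intro c hc
  have h := congrArg Subtype.val hc
  simp only [Fin.sum_univ_three, AddMemClass.coe_add, SetLike.val_smul, coe_gen] at h
  have h00 := congrFun (congrFun h 0) 0
  have h01 := congrFun (congrFun h 0) 1
  simp [basisMatrix, Complex.ext_iff] at h00 h01
  intro i
  fin_cases i
  exacts [h00, h01.1, h01.2]

theorem span_gen : ⊤ ≤ Submodule.span ℝ (Set.range gen) := by
  intro x _
  rw [eq_sum_smul_gen x]
  refine add_mem (add_mem ?_ ?_) ?_ <;>
    exact Submodule.smul_mem _ _ (Submodule.subset_span ⟨_, rfl⟩)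

noncomputable def basis : Module.Basis (Fin 3) ℝ su2 := .mk linearIndependent_gen span_gen

@[simp] theorem basis_apply (i : Fin 3) : basis i = gen i := Module.Basis.mk_apply _ _ i

@[simp] theorem basis_repr_gen (i : Fin 3) : basis.repr (gen i) = Finsupp.single i 1 := by
  rw [← basis_apply, Module.Basis.repr_self]

instance : FiniteDimensional ℝ su2 := .of_basis basis

theorem killingForm_gen (i j : Fin 3) :
    killingForm ℝ su2 (gen i) (gen j) = if i = j then -8 else 0 := by
  have h10 : ⁅gen 1, gen 0⁆ = (-2 : ℝ) • gen 2 := by rw [← lie_skew, lie_gen_zero_one]; module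
  have h21 : ⁅gen 2, gen 1⁆ = (-2 : ℝ) • gen 0 := by rw [← lie_skew, lie_gen_one_two]; module
  have h02 : ⁅gen 0, gen 2⁆ = (-2 : ℝ) • gen 1 := by rw [← lie_skew, lie_gen_two_zero]; module
  rw [killingForm_apply_apply, LinearMap.trace_eq_matrix_trace ℝ basis, Matrix.trace_fin_three]
  simp only [LinearMap.toMatrix_apply, basis_apply, LinearMap.comp_apply, LieAlgebra.ad_apply]
  fin_cases i <;> fin_cases j <;>
    simp [lie_gen_zero_one, lie_gen_one_two, lie_gen_two_zero, h10, h21, h02] <;> norm_num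

theorem killingForm_self_neg {x : su2} (hx : x ≠ 0) : killingForm ℝ su2 x x < 0 :=
  (killingForm ℝ su2).apply_self_neg_of_basis basis (c := -8) (by norm_num)
    (by simpa using killingForm_gen) hx

instance : IsKilling ℝ su2 :=
  .of_killingForm_anisotropic fun _ hx₀ => by_contra fun hx => (killingForm_self_neg hx).ne hx₀

instance : Nontrivial su2 := nontrivial_of_ne (gen 0) 0 (by simpa using basis.ne_zero 0)

theorem not_isLieAbelian : ¬ IsLieAbelian su2 := by
  rw [IsKilling.isLieAbelian_iff_subsingleton ℝ]
  exact not_subsingleton su2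

end su2

/-- On `su(2) × su(2)` with the form
`B((x,y),(x',y')) = -κ(x,x') + κ(y,y')`, there is no involutive Lie algebra automorphism
`θ` for which `(v, w) ↦ B v (θ w)` is positive definite, and none for which
`(v, w) ↦ -B v (θ w)` is positive definite. -/
theorem su2_prod_no_cartanInvolution :
    (¬ ∃ θ : (↥su2 × ↥su2) →ₗ⁅ℝ⁆ (↥su2 × ↥su2),
        (∀ v, θ (θ v) = v) ∧ ∀ v, v ≠ 0 → 0 < Bform v (θ v)) ∧
    ¬ ∃ θ : (↥su2 × ↥su2) →ₗ⁅ℝ⁆ (↥su2 × ↥su2),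
        (∀ v, θ (θ v) = v) ∧ ∀ v, v ≠ 0 → 0 < -Bform v (θ v) := by
  have neg_Bform : ∀ v w : su2 × su2, -Bform v w
      = killingForm ℝ su2 v.1 w.1 + (-killingForm ℝ su2) v.2 w.2 := by
    intro v w
    simp only [Bform, LinearMap.neg_apply, neg_add, neg_neg]
  refine ⟨fun ⟨θ, hθ⟩ => ?_, fun ⟨θ, hθ⟩ => ?_⟩
  · exact not_isCartanInvolution_prod_of_neg_snd (center_eq_bot ℝ su2) su2.not_isLieAbelian
      (-killingForm ℝ su2) (killingForm ℝ su2) (fun _ => su2.killingForm_self_neg) θ hθ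
  · refine not_isCartanInvolution_prod_of_neg_fst (center_eq_bot ℝ su2) su2.not_isLieAbelian
      (killingForm ℝ su2) (-killingForm ℝ su2) (fun _ => su2.killingForm_self_neg) θ ?_
    simpa only [IsCartanInvolution, ← neg_Bform] using hθ
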